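/- arXiv:math/0009194 — 7 statements merged into one kernel-verified Lean document; each statement's English description precedes it below -/
import Mathlib

section
/- For every polynomial f in ℂ[x,y] and every natural number k, the following two identities hold in the endomorphism algebra of ℂ[X]: Φ(f) ∘ M^k = Σ_{α=0}^{k} (k choose α) • M^α ∘ Φ(∂_y^{k−α} f), and D^k ∘ Φ(f) = Σ_{α=0}^{k} (k choose α) • Φ(∂_x^{k−α} f) ∘ D^α, where ∂^j denotes the j-th iterate of the partial derivative. -/
open Polynomial MvPolynomial

/-- Multiplication by X on ℂ[X]. -/
noncomputable def M : Module.End ℂ (Polynomial ℂ) := LinearMap.mulLeft ℂ Polynomial.X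

/-- Formal derivative on ℂ[X]. -/
noncomputable def D : Module.End ℂ (Polynomial ℂ) := Polynomial.derivative

/-- Normal-ordering map: extends x^p·y^q ↦ M^p ∘ D^q by ℂ-linearity. -/
noncomputable def Φ (f : MvPolynomial (Fin 2) ℂ) : Module.End ℂ (Polynomial ℂ) :=
  ∑ d ∈ f.support, f.coeff d • (M ^ d 0 * D ^ d 1)

/-!
Right multiplication by `m` in a ring is `L + δ`, where `L` is left multiplication by `m` and
`δ y = y * m - m * y`; these commute, so the binomial theorem expands `x * m ^ k` into the terms
`m ^ α * δ^[k - α] x`. The canonical commutation relation `D * M = M * D + 1` shows that `Φ`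
intertwines `∂_y` with `δ` for `m = M`, hence `δ^[j] (Φ f) = Φ (∂_y^[j] f)`. The formula for
`D ^ k * Φ f` is the mirror image, with left and right multiplication exchanged and `∂_x`.
-/

open Finset

section Leibniz

variable {A : Type*} [Ring A]

theorem mul_pow_eq_sum_choose_smul_mul_iterate (x m : A) (k : ℕ) :
    x * m ^ k = ∑ α ∈ range (k + 1), k.choose α • (m ^ α * (fun y ↦ y * m - m * y)^[k - α] x) := by
  set L := LinearMap.mulLeft ℤ m
  set δ := LinearMap.mulRight ℤ m - L
  have hδ : ⇑δ = fun y ↦ y * m - m * y := rfl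
  have hcomm : Commute L δ := (LinearMap.commute_mulLeft_right m m).sub_right (Commute.refl L)
  calc x * m ^ k = ((L + δ) ^ k) x := by simp [δ, LinearMap.pow_mulRight]
    _ = _ := by
      rw [hcomm.add_pow, LinearMap.sum_apply]
      refine sum_congr rfl fun α _ ↦ ?_
      rw [← Nat.cast_comm, ← nsmul_eq_mul]
      simp [L, Module.End.mul_apply, Module.End.pow_apply, hδ, LinearMap.pow_mulLeft]

theorem pow_mul_eq_sum_choose_smul_iterate_mul (m x : A) (k : ℕ) :
    m ^ k * x = ∑ α ∈ range (k + 1), k.choose α • ((fun y ↦ m * y - y * m)^[k - α] x * m ^ α) := by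
  set R := LinearMap.mulRight ℤ m
  set δ := LinearMap.mulLeft ℤ m - R
  have hδ : ⇑δ = fun y ↦ m * y - y * m := rfl
  have hcomm : Commute R δ := (LinearMap.commute_mulLeft_right m m).symm.sub_right (Commute.refl R)
  calc m ^ k * x = ((R + δ) ^ k) x := by simp [δ, LinearMap.pow_mulLeft]
    _ = _ := by
      rw [hcomm.add_pow, LinearMap.sum_apply]
      refine sum_congr rfl fun α _ ↦ ?_
      rw [← Nat.cast_comm, ← nsmul_eq_mul]
      simp [R, Module.End.mul_apply, Module.End.pow_apply, hδ, LinearMap.pow_mulRight]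

end Leibniz

section CanonicalCommutation

variable {A : Type*} [Semiring A] {a b : A}

theorem pow_mul_eq_of_mul_eq_mul_add_one (h : b * a = a * b + 1) (n : ℕ) :
    b ^ n * a = a * b ^ n + n • b ^ (n - 1) := by
  induction n with
  | zero => simp
  | succ n ih =>
    rcases n with _ | n
    · simpa using h
    calc b ^ (n + 2) * a = b * (b ^ (n + 1) * a) := by rw [← mul_assoc, ← pow_succ']
      _ = a * b ^ (n + 2) + (n + 2) • b ^ (n + 1) := by
        rw [ih, mul_add, ← mul_assoc, h, add_mul, one_mul, mul_assoc, ← pow_succ', mul_smul_comm,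
          ← pow_succ']
        simp only [add_tsub_cancel_right, add_smul, one_smul]
        abel

theorem mul_pow_eq_of_mul_eq_mul_add_one (h : b * a = a * b + 1) (n : ℕ) :
    b * a ^ n = a ^ n * b + n • a ^ (n - 1) := by
  induction n with
  | zero => simp
  | succ n ih =>
    rcases n with _ | n
    · simpa using h
    calc b * a ^ (n + 2) = (b * a ^ (n + 1)) * a := by rw [mul_assoc, ← pow_succ]
      _ = a ^ (n + 2) * b + (n + 2) • a ^ (n + 1) := by
        rw [ih, add_mul, mul_assoc, h, mul_add, mul_one, ← mul_assoc, ← pow_succ, smul_mul_assoc,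
          ← pow_succ]
        simp only [add_tsub_cancel_right, add_smul, one_smul]
        abel

end CanonicalCommutation

theorem D_mul_M : D * M = M * D + 1 := by
  refine LinearMap.ext fun p ↦ ?_
  simp [D, M, Polynomial.derivative_mul, add_comm]

noncomputable def Φₗ : MvPolynomial (Fin 2) ℂ →ₗ[ℂ] Module.End ℂ ℂ[X] :=
  Finsupp.linearCombination ℂ (fun d : Fin 2 →₀ ℕ ↦ M ^ d 0 * D ^ d 1) ∘ₗ
    (AddMonoidAlgebra.coeffLinearEquiv ℂ).toLinearMap

theorem coe_Φₗ : ⇑Φₗ = Φ := rfl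

theorem Φ_add (f g : MvPolynomial (Fin 2) ℂ) : Φ (f + g) = Φ f + Φ g := by
  rw [← coe_Φₗ, map_add]

theorem Φ_monomial (d : Fin 2 →₀ ℕ) (c : ℂ) : Φ (monomial d c) = c • (M ^ d 0 * D ^ d 1) := by
  simp [← coe_Φₗ, Φₗ, MvPolynomial.monomial]

theorem Φ_pderiv_one (f : MvPolynomial (Fin 2) ℂ) : Φ (pderiv 1 f) = Φ f * M - M * Φ f := by
  induction f using MvPolynomial.induction_on' with
  | add f g hf hg => rw [map_add, Φ_add, Φ_add, hf, hg]; noncomm_ring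
  | monomial d c =>
    rw [pderiv_monomial, Φ_monomial, Φ_monomial, smul_mul_assoc, mul_assoc,
      pow_mul_eq_of_mul_eq_mul_add_one D_mul_M, mul_add, ← mul_assoc, ← pow_succ, mul_smul_comm]
    simp [pow_succ', mul_assoc, mul_smul, Nat.cast_smul_eq_nsmul, nsmul_eq_mul]

theorem Φ_pderiv_zero (f : MvPolynomial (Fin 2) ℂ) : Φ (pderiv 0 f) = D * Φ f - Φ f * D := by
  induction f using MvPolynomial.induction_on' with
  | add f g hf hg => rw [map_add, Φ_add, Φ_add, hf, hg]; noncomm_ring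
  | monomial d c =>
    rw [pderiv_monomial, Φ_monomial, Φ_monomial, mul_smul_comm, ← mul_assoc,
      mul_pow_eq_of_mul_eq_mul_add_one D_mul_M, add_mul, mul_assoc, ← pow_succ', smul_mul_assoc]
    simp [pow_succ, mul_assoc, mul_smul, Nat.cast_smul_eq_nsmul, nsmul_eq_mul]

/-- Formulas (1.5): transposition of Φ(f) with powers of the generators. -/
theorem heisenberg_transposition (f : MvPolynomial (Fin 2) ℂ) (k : ℕ) :
    Φ f * M ^ k =
      ∑ α ∈ Finset.range (k + 1),
        k.choose α • (M ^ α * Φ ((⇑(pderiv (1 : Fin 2)))^[k - α] f)) ∧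
    D ^ k * Φ f =
      ∑ α ∈ Finset.range (k + 1),
        k.choose α • (Φ ((⇑(pderiv (0 : Fin 2)))^[k - α] f) * D ^ α) := by
  have iterate_pderiv_one (n : ℕ) :
      Φ ((⇑(pderiv (1 : Fin 2)))^[n] f) = (fun y ↦ y * M - M * y)^[n] (Φ f) :=
    Function.Semiconj.iterate_right (ga := pderiv 1) (gb := fun y ↦ y * M - M * y) Φ_pderiv_one n f
  have iterate_pderiv_zero (n : ℕ) :
      Φ ((⇑(pderiv (0 : Fin 2)))^[n] f) = (fun y ↦ D * y - y * D)^[n] (Φ f) :=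
    Function.Semiconj.iterate_right (ga := pderiv 0) (gb := fun y ↦ D * y - y * D) Φ_pderiv_zero n f
  simp only [iterate_pderiv_one, iterate_pderiv_zero]
  exact ⟨mul_pow_eq_sum_choose_smul_mul_iterate _ _ _, pow_mul_eq_sum_choose_smul_iterate_mul _ _ _⟩
end

section
/- Let f and g be nonzero polynomials in ℂ[x,y] and set h = Σ_{α=0}^{totalDegree f} (1/α!) • (∂_y^α f) · (∂_x^α g), computed in the commutative polynomial ring ℂ[x,y]. Then h ≠ 0 and the degree of h in the variable y equals the degree of f in y plus the degree of g in y, i.e., degreeOf y h = degreeOf y f + degreeOf y g. -/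
/-!
Split off the term `α = 0`, which is `f * g`. Every other term carries at least one derivative
in `y` on `f` and none on `g`, so each of its monomials has `y`-degree strictly below
`degreeOf y f + degreeOf y g = degreeOf y (f * g)`. Adding such a polynomial to `f * g` can
neither cancel it nor change its `y`-degree.
-/

open MvPolynomial

namespace MvPolynomial

variable {σ R : Type*} [CommSemiring R] {p q : MvPolynomial σ R} {i : σ}

theorem degreeOf_add_eq_of_forall_mem_support_lt (h : ∀ m ∈ q.support, m i < p.degreeOf i) :
    (p + q).degreeOf i = p.degreeOf i := by
  rcases eq_or_ne q 0 with rfl | hq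
  · rw [add_zero]
  obtain ⟨m, hm⟩ := support_nonempty.2 hq
  exact degreeOf_add_eq_of_degreeOf_lt ((degreeOf_lt_iff ((Nat.zero_le _).trans_lt (h m hm))).2 h)

theorem add_ne_zero_of_forall_mem_support_lt (hp : p ≠ 0)
    (h : ∀ m ∈ q.support, m i < p.degreeOf i) : p + q ≠ 0 := by
  rcases eq_or_ne q 0 with rfl | hq
  · rwa [add_zero]
  obtain ⟨m, hm⟩ := support_nonempty.2 hq
  intro hpq
  have hdeg := degreeOf_add_eq_of_forall_mem_support_lt h
  rw [hpq, degreeOf_zero] at hdeg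
  have := h m hm
  omega

theorem add_single_mem_support_of_mem_support_pderiv {m : σ →₀ ℕ}
    (hm : m ∈ (pderiv i p).support) : m + Finsupp.single i 1 ∈ p.support := by
  rw [mem_support_iff, coeff_pderiv] at hm
  exact mem_support_iff.2 (left_ne_zero_of_mul hm)

theorem add_single_mem_support_of_mem_support_iterate_pderiv {m : σ →₀ ℕ} {n : ℕ}
    (hm : m ∈ ((pderiv i)^[n] p).support) : m + Finsupp.single i n ∈ p.support := by
  induction n generalizing m with
  | zero => simpa using hm
  | succ n ih =>
    rw [Function.iterate_succ_apply'] at hm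
    have := ih (add_single_mem_support_of_mem_support_pderiv hm)
    rwa [add_assoc, ← Finsupp.single_add, add_comm 1 n] at this

theorem add_le_degreeOf_of_mem_support_iterate_pderiv_mul {j : σ} (hij : i ≠ j)
    {m : σ →₀ ℕ} {n k : ℕ} (hm : m ∈ ((pderiv i)^[n] p * (pderiv j)^[k] q).support) :
    m i + n ≤ p.degreeOf i + q.degreeOf i := by
  classical
  obtain ⟨a, ha, b, hb, rfl⟩ := Finset.mem_add.1 (support_mul _ _ hm)
  have hp := monomial_le_degreeOf i (add_single_mem_support_of_mem_support_iterate_pderiv ha)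
  have hq := monomial_le_degreeOf i (add_single_mem_support_of_mem_support_iterate_pderiv hb)
  simp only [Finsupp.add_apply, Finsupp.single_eq_same, Finsupp.single_eq_of_ne hij] at hp hq ⊢
  omega

end MvPolynomial

/-- The leading coefficient in y of the normal-ordered product is the product of
the leading coefficients in y of the factors. -/
theorem heisenberg_product_degreeOf
    (f g : MvPolynomial (Fin 2) ℂ) (hf : f ≠ 0) (hg : g ≠ 0) :
    (∑ α ∈ Finset.range (f.totalDegree + 1),
        ((α.factorial : ℂ)⁻¹) •
          ((⇑(pderiv (1 : Fin 2)))^[α] f * (⇑(pderiv (0 : Fin 2)))^[α] g)) ≠ 0 ∧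
    degreeOf (1 : Fin 2)
        (∑ α ∈ Finset.range (f.totalDegree + 1),
          ((α.factorial : ℂ)⁻¹) •
            ((⇑(pderiv (1 : Fin 2)))^[α] f * (⇑(pderiv (0 : Fin 2)))^[α] g)) =
      degreeOf (1 : Fin 2) f + degreeOf (1 : Fin 2) g := by
  classical
  rw [Finset.sum_range_succ', add_comm]
  simp only [Function.iterate_zero, id, Nat.factorial_zero, Nat.cast_one, inv_one, one_smul]
  have hfg := degreeOf_mul_eq (n := (1 : Fin 2)) hf hg
  have hlower : ∀ m ∈ (∑ α ∈ Finset.range f.totalDegree, ((α + 1).factorial : ℂ)⁻¹ •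
      ((⇑(pderiv (1 : Fin 2)))^[α + 1] f * (⇑(pderiv (0 : Fin 2)))^[α + 1] g)).support,
      m 1 < degreeOf 1 (f * g) := by
    intro m hm
    obtain ⟨α, -, hα⟩ := Finset.mem_biUnion.1 (support_sum hm)
    have := add_le_degreeOf_of_mem_support_iterate_pderiv_mul (by decide) (support_smul hα)
    omega
  exact ⟨add_ne_zero_of_forall_mem_support_lt (mul_ne_zero hf hg) hlower,
    (degreeOf_add_eq_of_forall_mem_support_lt hlower).trans hfg⟩
end

section
/- (Theorem 2.2) An element f of the Heisenberg algebra H is invertible if and only if it lies in the field of scalars: if f ∈ H and there exists g ∈ H with f ∘ g = 1 and g ∘ f = 1 (where 1 is the identity operator), then f = c • 1 for some scalar c ∈ ℂ; conversely every nonzero scalar multiple of the identity is invertible in H. -/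
open Polynomial

/-!
Every element of `ℂ[M, D]` is killed by a power of `ad M`, since `ad M` is a derivation that kills
`M` and sends `D` to `-1`. If `ad M ^ (m + 1)` kills `f ≠ 0` but `ad M ^ m` does not, then
`(ad M ^ m) f` commutes with `M`, so it is multiplication by a nonzero polynomial. By the Leibniz
rule these leading terms multiply, up to a binomial coefficient, so they cannot vanish on a product
of nonzero elements. As `ad M` kills `1`, `f * g = 1` forces `f` to commute with `M`: `f` is
multiplication by a polynomial with a polynomial inverse, that is, by a nonzero constant.
-/

open LieAlgebra Finset

attribute [local instance] LieRing.ofAssociativeRing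

theorem Module.End.exists_pow_apply_ne_zero_and_pow_succ_apply_eq_zero {R V : Type*}
    [Semiring R] [AddCommMonoid V] [Module R V] {φ : Module.End R V} {v : V} (hv : v ≠ 0)
    (hnil : ∃ n, (φ ^ n) v = 0) : ∃ m, (φ ^ m) v ≠ 0 ∧ (φ ^ (m + 1)) v = 0 := by
  classical
  have hpos : Nat.find hnil ≠ 0 := fun h => hv (by simpa [h] using Nat.find_spec hnil)
  refine ⟨Nat.find hnil - 1, Nat.find_min hnil (by omega), ?_⟩
  rw [Nat.sub_add_cancel (Nat.pos_of_ne_zero hpos)]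
  exact Nat.find_spec hnil

section Leibniz

variable {R A : Type*} [CommRing R] [Ring A] [Algebra R A] (x : A)

theorem ad_mul (a b : A) : ad R A x (a * b) = ad R A x a * b + a * ad R A x b := by
  simp only [ad_apply, Ring.lie_def, mul_sub, sub_mul, mul_assoc]
  abel

theorem ad_pow_mul (n : ℕ) (a b : A) :
    (ad R A x ^ n) (a * b) =
      ∑ ij ∈ antidiagonal n, n.choose ij.1 • ((ad R A x ^ ij.1) a * (ad R A x ^ ij.2) b) := by
  induction n with
  | zero => simp
  | succ n ih =>
    rw [sum_antidiagonal_choose_succ_nsmul (fun i j => (ad R A x ^ i) a * (ad R A x ^ j) b) n]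
    simp only [pow_succ', Module.End.mul_apply, ih, map_sum, map_nsmul, ad_mul, nsmul_add,
      sum_add_distrib]
    rw [add_comm, add_left_cancel_iff, sum_congr rfl]
    rintro ⟨i, j⟩ hij
    rw [Nat.choose_symm_of_eq_add (HasAntidiagonal.mem_antidiagonal.1 hij).symm]

theorem ad_pow_add_mul_eq_zero {a b : A} {m n : ℕ} (ha : (ad R A x ^ m) a = 0)
    (hb : (ad R A x ^ n) b = 0) : (ad R A x ^ (m + n)) (a * b) = 0 := by
  rw [ad_pow_mul]
  refine sum_eq_zero fun ij hij => ?_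
  rw [HasAntidiagonal.mem_antidiagonal] at hij
  rcases le_or_gt m ij.1 with hm | hm
  · rw [Module.End.pow_map_zero_of_le hm ha, zero_mul, smul_zero]
  · rw [Module.End.pow_map_zero_of_le (by omega) hb, mul_zero, smul_zero]

theorem ad_pow_add_mul {a b : A} {m n : ℕ} (ha : (ad R A x ^ (m + 1)) a = 0)
    (hb : (ad R A x ^ (n + 1)) b = 0) :
    (ad R A x ^ (m + n)) (a * b) = (m + n).choose m • ((ad R A x ^ m) a * (ad R A x ^ n) b) := by
  rw [ad_pow_mul, sum_eq_single (m, n)]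
  · rintro ⟨i, j⟩ hij hne
    rw [HasAntidiagonal.mem_antidiagonal] at hij
    rcases le_or_gt (m + 1) i with hm | hm
    · rw [Module.End.pow_map_zero_of_le hm ha, zero_mul, smul_zero]
    · have hj : n + 1 ≤ j := by simp only [ne_eq, Prod.mk.injEq] at hne; omega
      rw [Module.End.pow_map_zero_of_le hj hb, mul_zero, smul_zero]
  · simp

theorem exists_ad_pow_eq_zero_of_mem_adjoin {s : Set A}
    (hs : ∀ y ∈ s, ∃ n, (ad R A x ^ n) y = 0) {a : A} (ha : a ∈ Algebra.adjoin R s) :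
    ∃ n, (ad R A x ^ n) a = 0 := by
  induction ha using Algebra.adjoin_induction with
  | mem y hy => exact hs y hy
  | algebraMap r =>
    refine ⟨1, ?_⟩
    rw [pow_one, ad_apply, Ring.lie_def, Algebra.commutes, sub_self]
  | add a b _ _ iha ihb =>
    obtain ⟨m, hm⟩ := iha
    obtain ⟨n, hn⟩ := ihb
    refine ⟨max m n, ?_⟩
    rw [map_add, Module.End.pow_map_zero_of_le (le_max_left m n) hm,
      Module.End.pow_map_zero_of_le (le_max_right m n) hn, add_zero]
  | mul a b _ _ iha ihb =>
    obtain ⟨m, hm⟩ := iha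
    obtain ⟨n, hn⟩ := ihb
    exact ⟨m + n, ad_pow_add_mul_eq_zero x hm hn⟩

end Leibniz

theorem Polynomial.eq_mulLeft_of_commute_mulLeft_X {R : Type*} [CommSemiring R]
    {f : Module.End R R[X]} (h : Commute (LinearMap.mulLeft R X) f) :
    f = LinearMap.mulLeft R (f 1) := by
  have hpow : ∀ n, f (X ^ n) = X ^ n * f 1 := by
    intro n
    induction n with
    | zero => simp
    | succ n ih =>
      rw [pow_succ', ← LinearMap.mulLeft_apply (R := R), ← Module.End.mul_apply, ← h.eq,
        Module.End.mul_apply, ih, LinearMap.mulLeft_apply, LinearMap.mulLeft_apply, mul_assoc]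
  ext n : 2
  simp [← C_mul_X_pow_eq_monomial, hpow, mul_comm]

theorem lie_M_D : ⁅M, D⁆ = -1 := by
  refine LinearMap.ext fun p => ?_
  simp [M, D, Ring.lie_def, derivative_mul]

theorem exists_ad_M_pow_eq_zero {f : Module.End ℂ ℂ[X]}
    (hf : f ∈ Algebra.adjoin ℂ ({M, D} : Set (Module.End ℂ ℂ[X]))) :
    ∃ n, (ad ℂ _ M ^ n) f = 0 := by
  refine exists_ad_pow_eq_zero_of_mem_adjoin M ?_ hf
  rintro y (rfl | rfl)
  · exact ⟨1, by simp⟩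
  · refine ⟨2, ?_⟩
    rw [pow_two, Module.End.mul_apply, ad_apply _ _ M D, lie_M_D, ad_apply, ← commute_iff_lie_eq]
    exact Commute.neg_one_right M

theorem exists_ad_M_pow_eq_mulLeft {f : Module.End ℂ ℂ[X]}
    (hf : f ∈ Algebra.adjoin ℂ ({M, D} : Set (Module.End ℂ ℂ[X]))) (hf0 : f ≠ 0) :
    ∃ m, ∃ a ≠ 0, (ad ℂ _ M ^ (m + 1)) f = 0 ∧ (ad ℂ _ M ^ m) f = LinearMap.mulLeft ℂ a := by
  obtain ⟨m, hm, hm1⟩ := Module.End.exists_pow_apply_ne_zero_and_pow_succ_apply_eq_zero hf0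
    (exists_ad_M_pow_eq_zero hf)
  have hlead : (ad ℂ _ M ^ m) f = LinearMap.mulLeft ℂ ((ad ℂ _ M ^ m) f 1) := by
    refine eq_mulLeft_of_commute_mulLeft_X (commute_iff_lie_eq.mpr ?_)
    rwa [pow_succ', Module.End.mul_apply, ad_apply] at hm1
  refine ⟨m, _, fun h => hm ?_, hm1, hlead⟩
  rw [hlead, h, LinearMap.mulLeft_zero_eq_zero]

theorem commute_M_of_mul_eq_one {f g : Module.End ℂ ℂ[X]}
    (hf : f ∈ Algebra.adjoin ℂ ({M, D} : Set (Module.End ℂ ℂ[X])))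
    (hg : g ∈ Algebra.adjoin ℂ ({M, D} : Set (Module.End ℂ ℂ[X]))) (hfg : f * g = 1) :
    Commute M f := by
  obtain ⟨m, a, ha, hf1, hfa⟩ := exists_ad_M_pow_eq_mulLeft hf (left_ne_zero_of_mul_eq_one hfg)
  obtain ⟨n, b, hb, hg1, hgb⟩ := exists_ad_M_pow_eq_mulLeft hg (right_ne_zero_of_mul_eq_one hfg)
  have hlead : (ad ℂ _ M ^ (m + n)) (f * g) 1 = (m + n).choose m • (a * b) := by
    simp [ad_pow_add_mul M hf1 hg1, hfa, hgb]
  have hmn : m + n = 0 := by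
    by_contra hmn
    have hone : (ad ℂ _ M ^ (m + n)) 1 = 0 :=
      Module.End.pow_map_zero_of_le (k := 1) (by omega) (by simp [Ring.lie_def])
    rw [hfg, hone] at hlead
    exact smul_ne_zero (Nat.choose_pos (by omega)).ne' (mul_ne_zero ha hb) hlead.symm
  rw [commute_iff_lie_eq, ← ad_apply ℂ, ← pow_one (ad ℂ _ M), show 1 = m + 1 by omega]
  exact hf1

/-- Theorem 2.2: an element of the Heisenberg algebra is invertible iff it is
a scalar. -/
theorem heisenberg_invertible_iff_scalar :
    (∀ f ∈ Algebra.adjoin ℂ ({M, D} : Set (Module.End ℂ (Polynomial ℂ))),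
      (∃ g ∈ Algebra.adjoin ℂ ({M, D} : Set (Module.End ℂ (Polynomial ℂ))),
          f * g = 1 ∧ g * f = 1) →
        ∃ c : ℂ, f = c • (1 : Module.End ℂ (Polynomial ℂ))) ∧
    (∀ c : ℂ, c ≠ 0 →
      (c • (1 : Module.End ℂ (Polynomial ℂ))) ∈
          Algebra.adjoin ℂ ({M, D} : Set (Module.End ℂ (Polynomial ℂ))) ∧
      ∃ g ∈ Algebra.adjoin ℂ ({M, D} : Set (Module.End ℂ (Polynomial ℂ))),
        (c • (1 : Module.End ℂ (Polynomial ℂ))) * g = 1 ∧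
        g * (c • (1 : Module.End ℂ (Polynomial ℂ))) = 1) := by
  constructor
  · rintro f hf ⟨g, hg, hfg, -⟩
    have hf_mul : f = LinearMap.mulLeft ℂ (f 1) :=
      eq_mulLeft_of_commute_mulLeft_X (commute_M_of_mul_eq_one hf hg hfg)
    have hunit : IsUnit (f 1) := by
      refine IsUnit.of_mul_eq_one (g 1) ?_
      rw [← LinearMap.mulLeft_apply (R := ℂ), ← hf_mul, ← Module.End.mul_apply, hfg,
        Module.End.one_apply]
    obtain ⟨c, -, hc⟩ := Polynomial.isUnit_iff.mp hunit
    refine ⟨c, hf_mul.trans (LinearMap.ext fun p => ?_)⟩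
    simp [← hc, smul_eq_C_mul]
  · intro c hc
    have hmem : ∀ d : ℂ, d • (1 : Module.End ℂ ℂ[X]) ∈ Algebra.adjoin ℂ {M, D} := fun d => by
      rw [← Algebra.algebraMap_eq_smul_one]
      exact Subalgebra.algebraMap_mem _ d
    refine ⟨hmem c, c⁻¹ • 1, hmem c⁻¹, ?_, ?_⟩ <;>
      simp [smul_smul, hc]
end

section
/- (Theorem 2.3) Arbitrary two nonzero elements of the Heisenberg algebra are left comeasurable: for all f, g ∈ H with f ≠ 0 and g ≠ 0, there exist a, b ∈ H with a ≠ 0, b ≠ 0 and a ∘ f = b ∘ g. -/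
/-!
Let `S = span {1, M, D}`, so that `H` is the union of the powers `S ^ n`. Since `D M = M D + 1`,
`S ^ n` is spanned by the `M ^ i * D ^ j` with `i, j ≤ n`, so `dim S ^ n ≤ (n + 1) ^ 2`. If
`f, g ∈ S ^ d`, the map `(a, b) ↦ a f - b g` from `S ^ n × S ^ n` to `S ^ (n + d)` has a nonzero
kernel as soon as `dim S ^ (n + d) < 2 dim S ^ n`, and polynomial growth forbids `dim S ^ n` from
doubling at every step of length `d`.

A nonzero kernel element `(a, b)` has both entries nonzero because `H` has no zero divisors.
`M ^ i * D ^ j` sends `X ^ m` to `m (m - 1) ⋯ (m - j + 1) X ^ (m + i - j)`; so if `w` is the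
highest weight `i - j` occurring in `h = ∑ c i j • M ^ i * D ^ j ≠ 0`, the coefficient of degree
`m + w` of `h p`, for `p` of degree `m`, is the leading coefficient of `p` times a nonzero
combination of falling factorials evaluated at `m`. Hence a nonzero element of `H` sends
polynomials of large degree to polynomials of large degree, and so does a product of two of them.
-/

open Polynomial

open Filter Module

theorem Nat.exists_pow_lt_two_pow (a k : ℕ) : ∃ j : ℕ, (a * j + 1) ^ k < 2 ^ j := by
  have hlin : (fun j : ℕ => ((a * j + 1 : ℕ) : ℝ)) =O[atTop] (fun j => (j : ℝ)) := by
    refine Asymptotics.IsBigO.of_bound (a + 1) ?_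
    filter_upwards [eventually_ge_atTop 1] with j hj
    have : (1 : ℝ) ≤ j := by exact_mod_cast hj
    simp only [Real.norm_natCast]
    push_cast
    nlinarith
  have hsmall := (hlin.pow k).trans_isLittleO
    (isLittleO_pow_const_const_pow_of_one_lt k one_lt_two)
  obtain ⟨j, hj⟩ := (hsmall.bound one_half_pos).exists
  refine ⟨j, ?_⟩
  simp only [norm_pow, Real.norm_natCast, Real.norm_ofNat] at hj
  have : (0 : ℝ) < 2 ^ j := by positivity
  exact_mod_cast hj.trans_lt (by linarith : 1 / 2 * (2 : ℝ) ^ j < 2 ^ j)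

theorem Nat.exists_lt_two_mul_of_le_pow {φ : ℕ → ℕ} (h0 : 0 < φ 0) {k : ℕ}
    (hφ : ∀ n, φ n ≤ (n + 1) ^ k) (d : ℕ) : ∃ n, φ (n + d) < 2 * φ n := by
  by_contra! hdouble
  have hexp (j : ℕ) : 2 ^ j ≤ φ (d * j) := by
    induction j with
    | zero => simpa [Nat.one_le_iff_ne_zero, Nat.pos_iff_ne_zero] using h0
    | succ j ih =>
      rw [pow_succ, show d * (j + 1) = d * j + d by ring]
      linarith [hdouble (d * j)]
  obtain ⟨j, hj⟩ := Nat.exists_pow_lt_two_pow d k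
  exact absurd ((hexp j).trans (hφ _)) (not_le.2 hj)

theorem Submodule.exists_mul_eq_mul_of_finrank_pow_le {K A : Type*} [Field K] [Ring A]
    [Algebra K A] [Nontrivial A] {S : Submodule K A} (hS : S.FG) {k : ℕ}
    (hgrowth : ∀ n, finrank K ↥(S ^ n) ≤ (n + 1) ^ k) {d : ℕ} {f g : A}
    (hf : f ∈ S ^ d) (hg : g ∈ S ^ d) :
    ∃ n, ∃ a ∈ S ^ n, ∃ b ∈ S ^ n, (a ≠ 0 ∨ b ≠ 0) ∧ a * f = b * g := by
  have (n : ℕ) : FiniteDimensional K ↥(S ^ n) := Module.Finite.iff_fg.2 (hS.pow n)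
  have hone : 0 < finrank K ↥(S ^ 0) := by
    rw [Submodule.pow_zero, Submodule.one_eq_span, finrank_span_singleton one_ne_zero]
    exact one_pos
  obtain ⟨n, hn⟩ := Nat.exists_lt_two_mul_of_le_pow hone hgrowth d
  let L : ↥(S ^ n) × ↥(S ^ n) →ₗ[K] ↥(S ^ (n + d)) :=
    LinearMap.codRestrict _
      ((LinearMap.mulRight K f).comp ((S ^ n).subtype.comp (LinearMap.fst ..)) -
        (LinearMap.mulRight K g).comp ((S ^ n).subtype.comp (LinearMap.snd ..))) fun ab => by
      rw [pow_add S n d]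
      exact sub_mem (Submodule.mul_mem_mul ab.1.2 hf) (Submodule.mul_mem_mul ab.2.2 hg)
  have hker : LinearMap.ker L ≠ ⊥ := by
    apply LinearMap.ker_ne_bot_of_finrank_lt
    rw [Module.finrank_prod]
    omega
  obtain ⟨⟨a, b⟩, hL, hab⟩ := (Submodule.ne_bot_iff _).1 hker
  refine ⟨n, a, a.2, b, b.2, ?_, ?_⟩
  · simpa [Prod.ext_iff, or_iff_not_imp_left] using hab
  · simpa [L, sub_eq_zero] using congrArg Subtype.val hL

namespace Polynomial

variable {R : Type*} [CommRing R]

def HasWeightSymbol (h : End R R[X]) (w : ℤ) (σ : R[X]) : Prop :=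
  ∀ (p : R[X]) (e : ℕ), (p.natDegree : ℤ) + w ≤ e →
    (h p).coeff e =
      if (e : ℤ) = p.natDegree + w then p.leadingCoeff * σ.eval (p.natDegree : R) else 0

namespace HasWeightSymbol

variable {h : End R R[X]} {w : ℤ} {σ : R[X]}

theorem smul (hh : HasWeightSymbol h w σ) (c : R) : HasWeightSymbol (c • h) w (c • σ) := by
  intro p e he
  rw [LinearMap.smul_apply, coeff_smul, hh p e he, eval_smul, smul_eq_mul, smul_eq_mul]
  split_ifs <;> ring

theorem zero_of_lt (hh : HasWeightSymbol h w σ) {w' : ℤ} (hw : w < w') :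
    HasWeightSymbol h w' 0 := by
  intro p e he
  rw [hh p e (by omega), if_neg (by omega), eval_zero, mul_zero, ite_self]

theorem sum {ι : Type*} (s : Finset ι) {h : ι → End R R[X]} {σ : ι → R[X]}
    (hs : ∀ i ∈ s, HasWeightSymbol (h i) w (σ i)) :
    HasWeightSymbol (∑ i ∈ s, h i) w (∑ i ∈ s, σ i) := by
  intro p e he
  rw [LinearMap.sum_apply, finsetSum_coeff, Finset.sum_congr rfl fun i hi => hs i hi p e he]
  split_ifs <;> simp [eval_finsetSum, Finset.mul_sum]

theorem tendsto_comap_natDegree [IsDomain R] [CharZero R] (hh : HasWeightSymbol h w σ)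
    (hσ : σ ≠ 0) : Tendsto h (comap natDegree atTop) (comap natDegree atTop) := by
  rw [tendsto_comap_iff, tendsto_atTop]
  intro B
  have hroots : ∀ᶠ m : ℕ in atTop, σ.eval (m : R) ≠ 0 := by
    rw [← Nat.cofinite_eq_atTop]
    exact ((σ.finite_setOfPred_isRoot hσ).preimage Nat.cast_injective.injOn).compl_mem_cofinite
  obtain ⟨N, hN⟩ := (hroots.and (eventually_gt_atTop (B + w.natAbs))).exists_forall_of_atTop
  filter_upwards [preimage_mem_comap (Ici_mem_atTop N)] with p hp
  obtain ⟨hroot, hB⟩ := hN _ hp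
  have hp0 : p ≠ 0 := by
    rintro rfl
    simp at hB
  have hcoeff := hh p (p.natDegree + w).toNat (by omega)
  rw [if_pos (by omega)] at hcoeff
  have hne : (h p).coeff (p.natDegree + w).toNat ≠ 0 := by
    rw [hcoeff]
    exact mul_ne_zero (leadingCoeff_ne_zero.2 hp0) hroot
  exact le_trans (by omega) (le_natDegree_of_ne_zero hne)

end HasWeightSymbol

end Polynomial

namespace Heisenberg

noncomputable def subalgebra : Subalgebra ℂ (End ℂ ℂ[X]) := Algebra.adjoin ℂ {M, D}

noncomputable def generators : Submodule ℂ (End ℂ ℂ[X]) := Submodule.span ℂ {1, M, D}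

noncomputable def normalSpan (n : ℕ) : Submodule ℂ (End ℂ ℂ[X]) :=
  Submodule.span ℂ
    (Set.range fun ij : Fin (n + 1) × Fin (n + 1) => M ^ (ij.1 : ℕ) * D ^ (ij.2 : ℕ))

instance (n : ℕ) : FiniteDimensional ℂ ↥(normalSpan n) :=
  FiniteDimensional.span_of_finite ℂ (Set.finite_range _)

theorem M_pow_apply (i : ℕ) (p : ℂ[X]) : (M ^ i) p = X ^ i * p := by
  rw [M, LinearMap.pow_mulLeft, LinearMap.mulLeft_apply]

theorem D_pow_apply (j : ℕ) (p : ℂ[X]) : (D ^ j) p = derivative^[j] p := by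
  rw [D, Module.End.coe_pow]

theorem D_mul_M_pow (i : ℕ) : D * M ^ i = M ^ i * D + (i : ℂ) • M ^ (i - 1) := by
  refine LinearMap.ext fun p => ?_
  simp only [Module.End.mul_apply, LinearMap.add_apply, LinearMap.smul_apply, M_pow_apply]
  rw [D, derivative_mul, derivative_X_pow, smul_eq_C_mul]
  ring

theorem M_pow_mul_D_pow_mem_normalSpan {i j n : ℕ} (hi : i ≤ n) (hj : j ≤ n) :
    M ^ i * D ^ j ∈ normalSpan n :=
  Submodule.subset_span ⟨(⟨i, Nat.lt_succ_of_le hi⟩, ⟨j, Nat.lt_succ_of_le hj⟩), rfl⟩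

theorem finrank_normalSpan_le (n : ℕ) : finrank ℂ ↥(normalSpan n) ≤ (n + 1) ^ 2 :=
  (finrank_range_le_card _).trans_eq <| by simp [sq]

theorem generators_mul_normalSpan_le (n : ℕ) :
    generators * normalSpan n ≤ normalSpan (n + 1) := by
  rw [generators, normalSpan, Submodule.span_mul_span, Submodule.span_le, Set.mul_subset_iff]
  rintro x hx _ ⟨⟨⟨i, hi⟩, ⟨j, hj⟩⟩, rfl⟩
  simp only [Set.mem_insert_iff, Set.mem_singleton_iff] at hx
  rcases hx with rfl | rfl | rfl
  · rw [one_mul]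
    exact M_pow_mul_D_pow_mem_normalSpan (by omega) (by omega)
  · rw [← mul_assoc, ← pow_succ']
    exact M_pow_mul_D_pow_mem_normalSpan (by omega) (by omega)
  · rw [← mul_assoc, D_mul_M_pow, add_mul, smul_mul_assoc, mul_assoc, ← pow_succ']
    exact add_mem (M_pow_mul_D_pow_mem_normalSpan (by omega) (by omega))
      (Submodule.smul_mem _ _ (M_pow_mul_D_pow_mem_normalSpan (by omega) (by omega)))

theorem generators_pow_le_normalSpan (n : ℕ) : generators ^ n ≤ normalSpan n := by
  induction n with
  | zero =>
    rw [Submodule.pow_zero, Submodule.one_eq_span, Submodule.span_le, Set.singleton_subset_iff]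
    simpa using M_pow_mul_D_pow_mem_normalSpan (i := 0) (j := 0) le_rfl le_rfl
  | succ n ih =>
    rw [pow_succ' generators n]
    exact (mul_le_mul_right ih generators).trans (generators_mul_normalSpan_le n)

theorem finrank_generators_pow_le (n : ℕ) : finrank ℂ ↥(generators ^ n) ≤ (n + 1) ^ 2 :=
  (Submodule.finrank_mono (generators_pow_le_normalSpan n)).trans (finrank_normalSpan_le n)

theorem generators_fg : generators.FG := Submodule.fg_span (Set.toFinite _)

theorem generators_pow_mono : Monotone (generators ^ · : ℕ → Submodule ℂ (End ℂ ℂ[X])) :=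
  fun _ _ hmn => pow_le_pow_right' (M := Submodule ℂ (End ℂ ℂ[X]))
    (Submodule.one_le.2 (Submodule.subset_span (by simp))) hmn

theorem generators_le_subalgebra : generators ≤ Subalgebra.toSubmodule subalgebra := by
  rw [generators, Submodule.span_le]
  rintro x (rfl | rfl | rfl)
  · exact one_mem subalgebra
  all_goals exact Algebra.subset_adjoin (by simp)

theorem generators_pow_le_subalgebra (n : ℕ) :
    generators ^ n ≤ Subalgebra.toSubmodule subalgebra := by
  induction n with
  | zero => exact Submodule.one_le.2 (one_mem subalgebra)
  | succ n ih =>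
    rw [pow_succ generators n]
    exact Submodule.mul_le.2 fun x hx y hy =>
      show x * y ∈ subalgebra from mul_mem (ih hx) (generators_le_subalgebra hy)

theorem exists_mem_generators_pow {f : End ℂ ℂ[X]} (hf : f ∈ subalgebra) :
    ∃ n, f ∈ generators ^ n := by
  induction hf using Algebra.adjoin_induction with
  | mem x hx => exact ⟨1, by rw [pow_one generators]; exact Submodule.subset_span (by aesop)⟩
  | algebraMap r => exact ⟨0, Submodule.algebraMap_mem r⟩
  | add x y _ _ hx hy =>
    obtain ⟨m, hx⟩ := hx
    obtain ⟨n, hy⟩ := hy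
    exact ⟨max m n, add_mem (generators_pow_mono (le_max_left m n) hx)
      (generators_pow_mono (le_max_right m n) hy)⟩
  | mul x y _ _ hx hy =>
    obtain ⟨m, hx⟩ := hx
    obtain ⟨n, hy⟩ := hy
    exact ⟨m + n, by rw [pow_add generators m n]; exact Submodule.mul_mem_mul hx hy⟩

theorem subalgebra_le_span_M_pow_mul_D_pow : Subalgebra.toSubmodule subalgebra ≤
    Submodule.span ℂ (Set.range fun ij : ℕ × ℕ => M ^ ij.1 * D ^ ij.2) := by
  intro f hf
  obtain ⟨n, hn⟩ := exists_mem_generators_pow hf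
  refine Submodule.span_mono ?_ (generators_pow_le_normalSpan n hn)
  rintro _ ⟨ij, rfl⟩
  exact ⟨(ij.1, ij.2), rfl⟩

theorem hasWeightSymbol_M_pow_mul_D_pow (i j : ℕ) :
    HasWeightSymbol (M ^ i * D ^ j) (i - j) (descPochhammer ℂ j) := by
  intro p e he
  rw [Module.End.mul_apply, M_pow_apply, D_pow_apply, coeff_X_pow_mul', coeff_iterate_derivative,
    descPochhammer_eval_eq_descFactorial, nsmul_eq_mul]
  split_ifs with hie heq heq
  · rw [show e - i + j = p.natDegree by omega, mul_comm]
    rfl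
  · rw [coeff_eq_zero_of_natDegree_lt (by omega), mul_zero]
  · rw [Nat.descFactorial_eq_zero_iff_lt.2 (by omega), Nat.cast_zero, mul_zero]
  · rfl

theorem exists_hasWeightSymbol_ne_zero {h : End ℂ ℂ[X]}
    (hh : h ∈ Submodule.span ℂ (Set.range fun ij : ℕ × ℕ => M ^ ij.1 * D ^ ij.2))
    (h0 : h ≠ 0) :
    ∃ w σ, σ ≠ 0 ∧ HasWeightSymbol h w σ := by
  obtain ⟨c, rfl⟩ := Finsupp.mem_span_range_iff_exists_finsupp.1 hh
  have hc : c.support.Nonempty := Finsupp.support_nonempty_iff.2 (by rintro rfl; simp at h0)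
  let weight (ij : ℕ × ℕ) : ℤ := ij.1 - ij.2
  let w := c.support.sup' hc weight
  let σ (ij : ℕ × ℕ) : ℂ[X] := if weight ij = w then c ij • descPochhammer ℂ ij.2 else 0
  have hσ {ij} (hw : weight ij = w) : σ ij = C (c ij) * descPochhammer ℂ ij.2 := by
    rw [← smul_eq_C_mul]
    exact if_pos hw
  have hdeg {ij} (hij : ij ∈ c.support) (hw : weight ij = w) : (σ ij).degree = ij.2 := by
    rw [hσ hw, degree_C_mul (Finsupp.mem_support_iff.1 hij),
      degree_eq_natDegree (monic_descPochhammer ℂ ij.2).ne_zero, descPochhammer_natDegree]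
  have htop {ij} (hne : σ ij ≠ 0) : weight ij = w := by
    by_contra hw
    exact hne (if_neg hw)
  refine ⟨w, ∑ ij ∈ c.support, σ ij, ?_, HasWeightSymbol.sum _ fun ij hij => ?_⟩
  · obtain ⟨ij, hij, hmax⟩ := c.support.exists_mem_eq_sup' hc weight
    rw [Ne, ← degree_eq_bot, degree_sum_eq_of_disjoint, Finset.sup_eq_bot_iff]
    · intro hbot
      have := hbot ij hij
      rw [hdeg hij hmax.symm] at this
      exact WithBot.natCast_ne_bot _ this
    · rintro ij ⟨hij, hσij⟩ kl ⟨hkl, hσkl⟩ hne heq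
      have heq : ij.2 = kl.2 := by
        simpa [Function.onFun, hdeg hij (htop hσij), hdeg hkl (htop hσkl)] using heq
      have := (htop hσij).trans (htop hσkl).symm
      exact hne (Prod.ext (by simp only [weight] at this; omega) heq)
  · have hterm := (hasWeightSymbol_M_pow_mul_D_pow ij.1 ij.2).smul (c ij)
    by_cases hw : weight ij = w
    · rw [show σ ij = c ij • descPochhammer ℂ ij.2 from if_pos hw, ← hw]
      exact hterm
    · simpa only [σ, if_neg hw] using
        hterm.zero_of_lt (lt_of_le_of_ne (c.support.le_sup' weight hij) hw)

theorem tendsto_comap_natDegree_of_mem_subalgebra {h : End ℂ ℂ[X]} (hh : h ∈ subalgebra)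
    (h0 : h ≠ 0) : Tendsto h (comap natDegree atTop) (comap natDegree atTop) := by
  obtain ⟨w, σ, hσ, hhσ⟩ :=
    exists_hasWeightSymbol_ne_zero (subalgebra_le_span_M_pow_mul_D_pow hh) h0
  exact hhσ.tendsto_comap_natDegree hσ

theorem mul_ne_zero_of_mem_subalgebra {h k : End ℂ ℂ[X]} (hh : h ∈ subalgebra)
    (hk : k ∈ subalgebra) (h0 : h ≠ 0) (k0 : k ≠ 0) : h * k ≠ 0 := by
  intro hzero
  have htendsto := (tendsto_comap_natDegree_of_mem_subalgebra hh h0).comp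
    (tendsto_comap_natDegree_of_mem_subalgebra hk k0)
  have : NeBot (comap natDegree (atTop : Filter ℕ)) :=
    atTop_neBot.comap_of_surj fun n => ⟨(X : ℂ[X]) ^ n, natDegree_X_pow n⟩
  obtain ⟨p, hp⟩ := (htendsto.eventually (preimage_mem_comap (Ioi_mem_atTop 0))).exists
  simp [← Module.End.mul_apply, hzero] at hp

end Heisenberg

open Heisenberg

/-- Theorem 2.3: any two nonzero elements of the Heisenberg algebra are left
comeasurable. -/
theorem heisenberg_left_comeasurable
    (f g : Module.End ℂ (Polynomial ℂ))
    (hf : f ∈ Algebra.adjoin ℂ ({M, D} : Set (Module.End ℂ (Polynomial ℂ))))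
    (hg : g ∈ Algebra.adjoin ℂ ({M, D} : Set (Module.End ℂ (Polynomial ℂ))))
    (hf0 : f ≠ 0) (hg0 : g ≠ 0) :
    ∃ a ∈ Algebra.adjoin ℂ ({M, D} : Set (Module.End ℂ (Polynomial ℂ))),
      ∃ b ∈ Algebra.adjoin ℂ ({M, D} : Set (Module.End ℂ (Polynomial ℂ))),
        a ≠ 0 ∧ b ≠ 0 ∧ a * f = b * g := by
  obtain ⟨m, hfm⟩ := exists_mem_generators_pow hf
  obtain ⟨n, hgn⟩ := exists_mem_generators_pow hg
  obtain ⟨k, a, ha, b, hb, hab, heq⟩ :=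
    Submodule.exists_mul_eq_mul_of_finrank_pow_le generators_fg finrank_generators_pow_le
      (generators_pow_mono (le_max_left m n) hfm) (generators_pow_mono (le_max_right m n) hgn)
  have haH : a ∈ subalgebra := generators_pow_le_subalgebra k ha
  have hbH : b ∈ subalgebra := generators_pow_le_subalgebra k hb
  have ha0 : a ≠ 0 := by
    rintro rfl
    exact mul_ne_zero_of_mem_subalgebra hbH hg (hab.resolve_left (by simp)) hg0
      (by rw [← heq, zero_mul])
  have hb0 : b ≠ 0 := by
    rintro rfl
    exact mul_ne_zero_of_mem_subalgebra haH hf ha0 hf0 (by rw [heq, zero_mul])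
  exact ⟨a, haH, b, hbH, ha0, hb0, heq⟩
end

section
/- (Theorem 2.3, refined with degree bounds) For all nonzero polynomials f, g ∈ ℂ[x,y] there exist nonzero polynomials a, b ∈ ℂ[x,y] such that degreeOf y a ≤ degreeOf y g, degreeOf y b ≤ degreeOf y f, and Φ(a) ∘ Φ(f) = Φ(b) ∘ Φ(g) in the endomorphism algebra of ℂ[X]. -/
open Polynomial MvPolynomial

/-!
`Φ` identifies the polynomials of `y`-degree `≤ n` with the differential operators
`∑_{k ≤ n} s_k(X) D^k` of order `≤ n`. These form a free `ℂ[X]`-module of rank `n + 1`, and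
composition adds orders. So `(A, B) ↦ A Φ(f) - B Φ(g)`, from operators of orders
`≤ deg_y g` and `≤ deg_y f` (total rank `deg_y f + deg_y g + 2`) to operators of order
`≤ deg_y f + deg_y g` (rank one less), has a nonzero kernel element `(A, B)`.
Neither `A` nor `B` vanishes because these operators have no zero divisors: a nonzero operator
of order `≤ a` sends every polynomial of large degree `t` to a nonzero polynomial of degree
`≥ t - a`, as the coefficient of its top-weight term is the leading coefficient times a nonzero
polynomial in `t`.
-/

namespace Polynomial

variable {R : Type*}

theorem natDegree_mul_iterate_derivative_le [Semiring R] (s p : R[X]) (k : ℕ) :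
    (s * derivative^[k] p).natDegree ≤ s.natDegree + (p.natDegree - k) :=
  natDegree_mul_le.trans (Nat.add_le_add_left (natDegree_iterate_derivative p k) _)

theorem coeff_mul_iterate_derivative_natDegree [Semiring R] (s p : R[X]) {k : ℕ}
    (hk : k ≤ p.natDegree) :
    (s * derivative^[k] p).coeff (s.natDegree + (p.natDegree - k)) =
      s.leadingCoeff * (p.natDegree.descFactorial k • p.leadingCoeff) := by
  rw [coeff_mul_add_eq_of_natDegree_le le_rfl (natDegree_iterate_derivative p k),
    coeff_iterate_derivative, Nat.sub_add_cancel hk]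
  rfl

theorem sum_C_mul_descPochhammer_ne_zero [Ring R] [NoZeroDivisors R] [Nontrivial R]
    {s : Finset ℕ} (hs : s.Nonempty) {c : ℕ → R} (hc : ∀ k ∈ s, c k ≠ 0) :
    ∑ k ∈ s, Polynomial.C (c k) * descPochhammer R k ≠ 0 := by
  intro h
  have h' := congr_arg (Polynomial.coeff · (s.max' hs)) h
  simp only [finsetSum_coeff, Polynomial.coeff_C_mul, Polynomial.coeff_zero] at h'
  rw [Finset.sum_eq_single (s.max' hs)] at h'
  · have hlead := (monic_descPochhammer R (s.max' hs)).coeff_natDegree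
    rw [descPochhammer_natDegree] at hlead
    rw [hlead, mul_one] at h'
    exact hc _ (s.max'_mem hs) h'
  · intro k hk hne
    rw [coeff_eq_zero_of_natDegree_lt (by
      rw [descPochhammer_natDegree]; exact lt_of_le_of_ne (s.le_max' k hk) hne), mul_zero]
  · exact fun h => absurd (s.max'_mem hs) h

theorem eventually_eval_natCast_ne_zero [CommRing R] [IsDomain R] [CharZero R] {σ : R[X]}
    (hσ : σ ≠ 0) : ∀ᶠ t : ℕ in Filter.atTop, σ.eval (t : R) ≠ 0 := by
  rw [← Nat.cofinite_eq_atTop]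
  exact ((finite_setOfPred_isRoot hσ).preimage Nat.cast_injective.injOn).compl_mem_cofinite

end Polynomial

section DiffOperators

variable {K : Type*} [Field K]

local notation "∂" => (derivative : Module.End K K[X])

variable (K) in
noncomputable def diffOrderLE (n : ℕ) : Submodule K[X] (Module.End K K[X]) :=
  Submodule.span K[X] ((∂ ^ ·) '' Set.Iic n)

theorem derivative_pow_mem_diffOrderLE {k n : ℕ} (h : k ≤ n) : ∂ ^ k ∈ diffOrderLE K n :=
  Submodule.subset_span ⟨k, h, rfl⟩

theorem diffOrderLE_mono : Monotone (diffOrderLE K) := fun _ _ h =>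
  Submodule.span_mono (Set.image_mono (Set.Iic_subset_Iic.mpr h))

theorem derivative_mul_smul (s : K[X]) (E : Module.End K K[X]) :
    ∂ * (s • E) = derivative s • E + s • (∂ * E) := by
  refine LinearMap.ext fun p => ?_
  simp [derivative_mul]

theorem derivative_mul_mem_diffOrderLE {n : ℕ} {E : Module.End K K[X]}
    (hE : E ∈ diffOrderLE K n) : ∂ * E ∈ diffOrderLE K (n + 1) := by
  induction hE using Submodule.span_induction with
  | mem E hE =>
    obtain ⟨k, hk, rfl⟩ := hE
    rw [← pow_succ']
    exact derivative_pow_mem_diffOrderLE (Nat.succ_le_succ hk)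
  | zero => simp
  | add E E' _ _ hE hE' => rw [mul_add]; exact add_mem hE hE'
  | smul s E hE ihE =>
    rw [derivative_mul_smul]
    exact add_mem (Submodule.smul_mem _ _ (diffOrderLE_mono n.le_succ hE))
      (Submodule.smul_mem _ _ ihE)

theorem derivative_pow_mul_mem_diffOrderLE {n : ℕ} {E : Module.End K K[X]}
    (hE : E ∈ diffOrderLE K n) (k : ℕ) : ∂ ^ k * E ∈ diffOrderLE K (n + k) := by
  induction k with
  | zero => simpa using hE
  | succ k ih => rw [pow_succ', mul_assoc]; exact derivative_mul_mem_diffOrderLE ih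

theorem mul_mem_diffOrderLE {m n : ℕ} {A B : Module.End K K[X]}
    (hA : A ∈ diffOrderLE K m) (hB : B ∈ diffOrderLE K n) : A * B ∈ diffOrderLE K (m + n) := by
  induction hA using Submodule.span_induction with
  | mem A hA =>
    obtain ⟨k, hk, rfl⟩ := hA
    exact diffOrderLE_mono (by rw [Set.mem_Iic] at hk; omega)
      (derivative_pow_mul_mem_diffOrderLE hB k)
  | zero => simp
  | add A A' _ _ hA hA' => rw [add_mul]; exact add_mem hA hA'
  | smul s A _ hA => rw [smul_mul_assoc]; exact Submodule.smul_mem _ _ hA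

instance (n : ℕ) : Module.Finite K[X] (diffOrderLE K n) :=
  Module.Finite.span_of_finite _ ((Set.finite_Iic n).image _)

theorem linearCombination_derivative_pow_apply (l : ℕ →₀ K[X]) (p : K[X]) :
    Finsupp.linearCombination K[X] (∂ ^ ·) l p = l.sum fun k s => s * derivative^[k] p := by
  simp [Finsupp.linearCombination_apply, Finsupp.sum, LinearMap.sum_apply, Module.End.pow_apply]

/-- The weight `deg s_k + (a - k)` of the term `s_k ∂^k` is `deg s_k - k` shifted by `a`,
so that it stays in `ℕ`. -/
theorem coeff_linearCombination_derivative_pow_apply {a ν : ℕ} {l : ℕ →₀ K[X]}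
    (hl : ∀ k ∈ l.support, k ≤ a) (hν : ∀ k ∈ l.support, (l k).natDegree + (a - k) ≤ ν)
    {p : K[X]} (hp : a ≤ p.natDegree) :
    (Finsupp.linearCombination K[X] (∂ ^ ·) l p).coeff (ν + (p.natDegree - a)) =
      p.leadingCoeff * (∑ k ∈ l.support with (l k).natDegree + (a - k) = ν,
        Polynomial.C (l k).leadingCoeff * descPochhammer K k).eval (p.natDegree : K) := by
  rw [linearCombination_derivative_pow_apply, Finsupp.sum, finsetSum_coeff, eval_finsetSum,
    Finset.mul_sum, Finset.sum_filter]
  refine Finset.sum_congr rfl fun k hk => ?_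
  have hka := hl k hk
  split_ifs with hkν
  · rw [show ν + (p.natDegree - a) = (l k).natDegree + (p.natDegree - k) by omega,
      coeff_mul_iterate_derivative_natDegree _ _ (hka.trans hp), Polynomial.eval_mul,
      Polynomial.eval_C, descPochhammer_eval_eq_descFactorial, nsmul_eq_mul]
    ring
  · refine coeff_eq_zero_of_natDegree_lt ((natDegree_mul_iterate_derivative_le _ _ _).trans_lt ?_)
    have := hν k hk
    omega

variable [CharZero K]

theorem linearIndependent_derivative_pow : LinearIndependent K[X] (∂ ^ · : ℕ → _) := by
  rw [linearIndependent_iff]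
  intro l hl
  refine Finsupp.ext fun j => ?_
  induction j using Nat.strong_induction_on with | _ j ih => ?_
  have h := LinearMap.congr_fun hl (Polynomial.X ^ j)
  rw [linearCombination_derivative_pow_apply, Finsupp.sum, Finset.sum_eq_single j] at h
  · simpa [iterate_derivative_X_pow_eq_smul, Nat.factorial_ne_zero] using h
  · intro k _ hkj
    rcases hkj.lt_or_gt with hlt | hgt
    · simp [ih k hlt]
    · simp [iterate_derivative_X_pow_eq_smul, Nat.descFactorial_eq_zero_iff_lt.mpr hgt]
  · intro hj
    simp [Finsupp.notMem_support_iff.mp hj]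

instance (n : ℕ) : Module.Free K[X] (diffOrderLE K n) := by
  rw [diffOrderLE, Set.image_eq_range]
  exact .of_basis (Module.Basis.span (linearIndependent_derivative_pow.comp _ Subtype.val_injective))

theorem finrank_diffOrderLE (n : ℕ) : Module.finrank K[X] (diffOrderLE K n) = n + 1 := by
  rw [diffOrderLE, Set.image_eq_range,
    finrank_span_eq_card (b := fun k : Set.Iic n => ∂ ^ (k : ℕ))
      (linearIndependent_derivative_pow.comp _ Subtype.val_injective),
    ← Set.toFinset_card, Set.toFinset_Iic, Nat.card_Iic]

theorem exists_apply_ne_zero_and_natDegree_le {a : ℕ} {A : Module.End K K[X]}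
    (hA : A ∈ diffOrderLE K a) (hA0 : A ≠ 0) :
    ∃ t₀, ∀ p : K[X], t₀ ≤ p.natDegree → A p ≠ 0 ∧ p.natDegree - a ≤ (A p).natDegree := by
  obtain ⟨l, hl, rfl⟩ := (Finsupp.mem_span_image_iff_linearCombination _).mp hA
  have hla : ∀ k ∈ l.support, k ≤ a := fun k hk => hl hk
  have hne : l.support.Nonempty :=
    Finsupp.support_nonempty_iff.mpr (by rintro rfl; exact hA0 (map_zero _))
  set w := fun k => (l k).natDegree + (a - k)
  obtain ⟨k₀, hk₀, hk₀w⟩ := Finset.exists_mem_eq_sup _ hne w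
  have hσ := sum_C_mul_descPochhammer_ne_zero (s := {k ∈ l.support | w k = l.support.sup w})
    ⟨k₀, Finset.mem_filter.mpr ⟨hk₀, hk₀w.symm⟩⟩
    fun k hk => leadingCoeff_ne_zero.mpr (Finsupp.mem_support_iff.mp (Finset.mem_filter.mp hk).1)
  obtain ⟨t₁, ht₁⟩ := Filter.eventually_atTop.mp (eventually_eval_natCast_ne_zero hσ)
  refine ⟨max t₁ (a + 1), fun p hp => ?_⟩
  have hp0 : p ≠ 0 := by rintro rfl; simp at hp
  have hc := coeff_linearCombination_derivative_pow_apply hla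
    (fun k hk => Finset.le_sup (f := w) hk) (p := p) (by omega)
  have hc0 : (Finsupp.linearCombination K[X] (∂ ^ ·) l p).coeff
      (l.support.sup w + (p.natDegree - a)) ≠ 0 := by
    rw [hc]
    exact mul_ne_zero (leadingCoeff_ne_zero.mpr hp0) (ht₁ _ (by omega))
  exact ⟨fun h => hc0 (by rw [h, Polynomial.coeff_zero]),
    (le_natDegree_of_ne_zero hc0).trans' (by omega)⟩

theorem mul_ne_zero_of_mem_diffOrderLE {a b : ℕ} {A B : Module.End K K[X]}
    (hA : A ∈ diffOrderLE K a) (hB : B ∈ diffOrderLE K b) (hA0 : A ≠ 0) (hB0 : B ≠ 0) :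
    A * B ≠ 0 := by
  obtain ⟨s, hs⟩ := exists_apply_ne_zero_and_natDegree_le hA hA0
  obtain ⟨t, ht⟩ := exists_apply_ne_zero_and_natDegree_le hB hB0
  have hBp := ht (Polynomial.X ^ (s + b + t)) (by rw [natDegree_X_pow]; omega)
  rw [natDegree_X_pow] at hBp
  intro hAB
  exact (hs (B (Polynomial.X ^ (s + b + t))) (by omega)).1
    (by rw [← Module.End.mul_apply, hAB, LinearMap.zero_apply])

theorem exists_mul_eq_mul_of_mem_diffOrderLE {m n : ℕ} {F G : Module.End K K[X]}
    (hF : F ∈ diffOrderLE K n) (hG : G ∈ diffOrderLE K m) (hF0 : F ≠ 0) (hG0 : G ≠ 0) :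
    ∃ A ∈ diffOrderLE K m, ∃ B ∈ diffOrderLE K n, A ≠ 0 ∧ B ≠ 0 ∧ A * F = B * G := by
  obtain ⟨Ψ, hΨ⟩ : ∃ Ψ : diffOrderLE K m × diffOrderLE K n →ₗ[K[X]] diffOrderLE K (m + n),
      ∀ A B, (Ψ (A, B) : Module.End K K[X]) = A * F - B * G :=
    ⟨(LinearMap.mulRight K[X] F ∘ₗ (diffOrderLE K m).subtype ∘ₗ LinearMap.fst _ _ _ -
      LinearMap.mulRight K[X] G ∘ₗ (diffOrderLE K n).subtype ∘ₗ LinearMap.snd _ _ _).codRestrict _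
      fun AB => by
        simp only [LinearMap.sub_apply, LinearMap.comp_apply, LinearMap.mulRight_apply,
          Submodule.subtype_apply, LinearMap.fst_apply, LinearMap.snd_apply]
        exact sub_mem (mul_mem_diffOrderLE AB.1.2 hF)
          (diffOrderLE_mono (Nat.add_comm n m).le (mul_mem_diffOrderLE AB.2.2 hG)),
      fun _ _ => rfl⟩
  have hΨinj : ¬ Function.Injective Ψ := fun h => by
    have := LinearMap.finrank_le_finrank_of_injective h
    rw [Module.finrank_prod, finrank_diffOrderLE, finrank_diffOrderLE, finrank_diffOrderLE] at this
    omega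
  rw [injective_iff_map_eq_zero] at hΨinj
  push Not at hΨinj
  obtain ⟨⟨A, B⟩, hΨAB, hAB0⟩ := hΨinj
  have hAB : (A : Module.End K K[X]) * F = B * G := by
    rw [← sub_eq_zero, ← hΨ, hΨAB, ZeroMemClass.coe_zero]
  have hA0 : (A : Module.End K K[X]) ≠ 0 := by
    intro hA
    have hB : (B : Module.End K K[X]) ≠ 0 := fun hB => hAB0 (by ext1 <;> ext1 <;> simp [hA, hB])
    exact mul_ne_zero_of_mem_diffOrderLE B.2 hG hB hG0 (by rw [← hAB, hA, zero_mul])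
  have hB0 : (B : Module.End K K[X]) ≠ 0 := fun hB =>
    mul_ne_zero_of_mem_diffOrderLE A.2 hF hA0 hF0 (by rw [hAB, hB, zero_mul])
  exact ⟨A, A.2, B, B.2, hA0, hB0, hAB⟩

end DiffOperators

noncomputable def normalOrdering : MvPolynomial (Fin 2) ℂ →ₗ[ℂ] Module.End ℂ ℂ[X] :=
  (basisMonomials (Fin 2) ℂ).constr ℂ fun d => M ^ d 0 * D ^ d 1

theorem coe_normalOrdering : ⇑normalOrdering = Φ := by
  funext f
  rw [normalOrdering, Module.Basis.constr_apply, Finsupp.sum]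
  rfl

theorem normalOrdering_monomial_one (d : Fin 2 →₀ ℕ) :
    normalOrdering (monomial d 1) = M ^ d 0 * D ^ d 1 := by
  have h := (basisMonomials (Fin 2) ℂ).constr_basis ℂ (fun d => M ^ d 0 * D ^ d 1) d
  simp only [MvPolynomial.coe_basisMonomials] at h
  exact h

theorem M_pow_mul (i : ℕ) (E : Module.End ℂ ℂ[X]) :
    M ^ i * E = (Polynomial.X ^ i : ℂ[X]) • E := by
  rw [M, LinearMap.pow_mulLeft]
  rfl

theorem Φ_eq_zero_iff {f : MvPolynomial (Fin 2) ℂ} : Φ f = 0 ↔ f = 0 := by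
  rw [← coe_normalOrdering]
  refine (Module.Basis.injective_constr_of_linearIndependent _ ?_).eq_iff' (map_zero _)
  have hv : (fun d : Fin 2 →₀ ℕ => M ^ d 0 * D ^ d 1) =
      (fun p => Polynomial.basisMonomials ℂ p.1 • (derivative : Module.End ℂ ℂ[X]) ^ p.2) ∘
        fun d => (d 0, d 1) := by
    ext d : 1
    simp [M_pow_mul, D, Polynomial.monomial_one_right_eq_X_pow]
  rw [hv]
  exact (linearIndependent_smul (Polynomial.basisMonomials ℂ).linearIndependent
    linearIndependent_derivative_pow).comp _ fun d d' hdd' =>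
      Finsupp.ext (Fin.forall_fin_two.mpr ⟨congr_arg Prod.fst hdd', congr_arg Prod.snd hdd'⟩)

theorem Φ_mem_diffOrderLE (f : MvPolynomial (Fin 2) ℂ) : Φ f ∈ diffOrderLE ℂ (degreeOf 1 f) := by
  refine Submodule.sum_mem _ fun d hd => Submodule.smul_of_tower_mem _ _ ?_
  rw [M_pow_mul]
  exact Submodule.smul_mem _ _ (derivative_pow_mem_diffOrderLE (monomial_le_degreeOf 1 hd))

theorem exists_Φ_eq_of_mem_diffOrderLE {m : ℕ} {A : Module.End ℂ ℂ[X]}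
    (hA : A ∈ diffOrderLE ℂ m) : ∃ a, degreeOf 1 a ≤ m ∧ Φ a = A := by
  have hspan : Submodule.span ℂ (Set.range (Polynomial.X ^ · : ℕ → ℂ[X])) = ⊤ := by
    simpa [Polynomial.monomial_one_right_eq_X_pow] using (Polynomial.basisMonomials ℂ).span_eq
  have hle : (diffOrderLE ℂ m).restrictScalars ℂ ≤
      (restrictSupport ℂ {d | d 1 ≤ m}).map normalOrdering := by
    rw [diffOrderLE, ← Submodule.span_smul_of_span_eq_top hspan, Submodule.span_le]
    rintro _ ⟨_, ⟨i, rfl⟩, _, ⟨k, hk, rfl⟩, rfl⟩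
    refine ⟨monomial (Finsupp.single 0 i + Finsupp.single 1 k) 1, ?_, ?_⟩
    · refine (mem_restrictSupport_iff _).mpr fun d hd => ?_
      rw [Finset.mem_singleton.mp (support_monomial_subset hd)]
      simpa using hk
    · rw [normalOrdering_monomial_one]
      simp [M_pow_mul, D]
  obtain ⟨a, ha, rfl⟩ := hle hA
  exact ⟨a, degreeOf_le_iff.mpr fun d hd => ha hd, congr_fun coe_normalOrdering.symm a⟩

/-- Theorem 2.3, refined: comeasuring factors with degree bounds in y. -/
theorem heisenberg_left_comeasurable_degree_bounds
    (f g : MvPolynomial (Fin 2) ℂ) (hf : f ≠ 0) (hg : g ≠ 0) :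
    ∃ a b : MvPolynomial (Fin 2) ℂ, a ≠ 0 ∧ b ≠ 0 ∧
      degreeOf (1 : Fin 2) a ≤ degreeOf (1 : Fin 2) g ∧
      degreeOf (1 : Fin 2) b ≤ degreeOf (1 : Fin 2) f ∧
      Φ a * Φ f = Φ b * Φ g := by
  obtain ⟨A, hA, B, hB, hA0, hB0, hAB⟩ := exists_mul_eq_mul_of_mem_diffOrderLE
    (Φ_mem_diffOrderLE f) (Φ_mem_diffOrderLE g) (Φ_eq_zero_iff.not.mpr hf)
    (Φ_eq_zero_iff.not.mpr hg)
  obtain ⟨a, ha, rfl⟩ := exists_Φ_eq_of_mem_diffOrderLE hA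
  obtain ⟨b, hb, rfl⟩ := exists_Φ_eq_of_mem_diffOrderLE hB
  exact ⟨a, b, fun h => hA0 (Φ_eq_zero_iff.mpr h), fun h => hB0 (Φ_eq_zero_iff.mpr h),
    ha, hb, hAB⟩
end

section
/- Let R be a nontrivial associative unital ring with no zero divisors that satisfies the left Ore condition. Then the equivalence of fractions is transitive: for pairs (b, a), (d, c), (f, e) of elements of R with b ≠ 0, d ≠ 0, f ≠ 0, if (b, a) ~ (d, c) and (d, c) ~ (f, e), then (b, a) ~ (f, e). -/
/-- Transitivity of the equivalence of left fractions over a nontrivial ring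
without zero divisors satisfying the left Ore condition.
A pair `(b, a)` with `b ≠ 0` represents the fraction `b⁻¹ ∘ a`; pairs `(b, a)`
and `(d, c)` are equivalent iff `u·b = v·d` and `u·a = v·c` for some nonzero
`u, v`. -/
theorem fraction_equiv_trans
    {R : Type*} [Ring R] [Nontrivial R]
    (hnzd : ∀ a b : R, a * b = 0 → a = 0 ∨ b = 0)
    (ore : ∀ f g : R, f ≠ 0 → g ≠ 0 → ∃ a b : R, a ≠ 0 ∧ b ≠ 0 ∧ a * f = b * g)
    (b a d c f e : R) (hb : b ≠ 0) (hd : d ≠ 0) (hf : f ≠ 0)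
    (h1 : ∃ u v : R, u ≠ 0 ∧ v ≠ 0 ∧ u * b = v * d ∧ u * a = v * c)
    (h2 : ∃ w z : R, w ≠ 0 ∧ z ≠ 0 ∧ w * d = z * f ∧ w * c = z * e) :
    ∃ p q : R, p ≠ 0 ∧ q ≠ 0 ∧ p * b = q * f ∧ p * a = q * e := by
  obtain ⟨u, v, hu, hv, huv1, huv2⟩ := h1
  obtain ⟨w, z, hw, hz, hwz1, hwz2⟩ := h2
  obtain ⟨s, t, hs, ht, hst⟩ := ore v w hv hw
  refine ⟨s * u, t * z, ?_, ?_, ?_, ?_⟩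
  · intro h; rcases hnzd _ _ h with h' | h' <;> [exact hs h'; exact hu h']
  · intro h; rcases hnzd _ _ h with h' | h' <;> [exact ht h'; exact hz h']
  · calc s * u * b = s * (u * b) := by rw [mul_assoc]
    _ = s * (v * d) := by rw [huv1]
    _ = (s * v) * d := by rw [mul_assoc]
    _ = (t * w) * d := by rw [hst]
    _ = t * (w * d) := by rw [mul_assoc]
    _ = t * (z * f) := by rw [hwz1]
    _ = t * z * f := by rw [mul_assoc]
  · calc s * u * a = s * (u * a) := by rw [mul_assoc]
    _ = s * (v * c) := by rw [huv2]
    _ = (s * v) * c := by rw [mul_assoc]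
    _ = (t * w) * c := by rw [hst]
    _ = t * (w * c) := by rw [mul_assoc]
    _ = t * (z * e) := by rw [hwz2]
    _ = t * z * e := by rw [mul_assoc]
end

section
/- (Lemma 3.3, well-definedness of multiplication of fractions) Let R be a nontrivial associative unital ring with no zero divisors satisfying the left Ore condition. Let b, d, b', d' ∈ R be nonzero, let a, a' ∈ R be nonzero, and suppose (b, a) ~ (b', a') and (d, c) ~ (d', c'). Let u, v ∈ R be nonzero with u·d = v·(d·a), and let u', v' ∈ R be nonzero with u'·d' = v'·(d'·a'). Then (v·d·b, u·c) ~ (v'·d'·b', u'·c'). -/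
/-- Lemma 3.3: well-definedness of multiplication of fractions. -/
theorem fraction_mul_well_defined
    {R : Type*} [Ring R] [Nontrivial R]
    (hnzd : ∀ a b : R, a * b = 0 → a = 0 ∨ b = 0)
    (ore : ∀ f g : R, f ≠ 0 → g ≠ 0 → ∃ a b : R, a ≠ 0 ∧ b ≠ 0 ∧ a * f = b * g)
    (b a d c b' a' d' c' : R)
    (hb : b ≠ 0) (hd : d ≠ 0) (hb' : b' ≠ 0) (hd' : d' ≠ 0)
    (ha : a ≠ 0) (ha' : a' ≠ 0)
    (h1 : ∃ u v : R, u ≠ 0 ∧ v ≠ 0 ∧ u * b = v * b' ∧ u * a = v * a')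
    (h2 : ∃ u v : R, u ≠ 0 ∧ v ≠ 0 ∧ u * d = v * d' ∧ u * c = v * c')
    (u v : R) (hu : u ≠ 0) (hv : v ≠ 0) (huv : u * d = v * (d * a))
    (u' v' : R) (hu' : u' ≠ 0) (hv' : v' ≠ 0) (huv' : u' * d' = v' * (d' * a')) :
    ∃ p q : R, p ≠ 0 ∧ q ≠ 0 ∧
      p * (v * d * b) = q * (v' * d' * b') ∧
      p * (u * c) = q * (u' * c') := by
  have nz : ∀ x y : R, x ≠ 0 → y ≠ 0 → x * y ≠ 0 := by
    intro x y hx hy h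
    rcases hnzd x y h with h | h
    · exact hx h
    · exact hy h
  obtain ⟨s, t, hs, ht, hsb, hsa⟩ := h1
  obtain ⟨s₂, t₂, hs2, ht2, hsd, hsc⟩ := h2
  have hvd : v * d ≠ 0 := nz _ _ hv hd
  have hv'd' : v' * d' ≠ 0 := nz _ _ hv' hd'
  -- β * s = p₀ * (v*d)
  obtain ⟨β, p₀, hβ, hp₀, hβs⟩ := ore s (v * d) hs hvd
  -- γ * (β*t) = q₀ * (v'*d')
  obtain ⟨γ, q₀, hγ, hq₀, hγe⟩ := ore (β * t) (v' * d') (nz _ _ hβ ht) hv'd'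
  set p₁ := γ * p₀ with hp₁def
  have hp₁ : p₁ ≠ 0 := nz _ _ hγ hp₀
  have key1 : p₁ * (v * d) = (γ * β) * s := by
    rw [hp₁def, mul_assoc, ← hβs, mul_assoc]
  have key2 : q₀ * (v' * d') = (γ * β) * t := by
    rw [← hγe, mul_assoc]
  -- core equality p₁ * (u*d) = q₀ * (u'*d')
  have key : p₁ * (u * d) = q₀ * (u' * d') := by
    calc p₁ * (u * d) = p₁ * (v * (d * a)) := by rw [huv]
      _ = (p₁ * (v * d)) * a := by simp only [hp₁def, mul_assoc]
      _ = ((γ * β) * s) * a := by rw [key1]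
      _ = (γ * β) * (s * a) := by rw [mul_assoc]
      _ = (γ * β) * (t * a') := by rw [hsa]
      _ = ((γ * β) * t) * a' := by simp only [mul_assoc]
      _ = (q₀ * (v' * d')) * a' := by rw [key2]
      _ = q₀ * (v' * (d' * a')) := by simp only [mul_assoc]
      _ = q₀ * (u' * d') := by rw [huv']
  -- δ * (p₁*u) = ε * s₂
  obtain ⟨δ, ε, hδ, hε, hδe⟩ := ore (p₁ * u) s₂ (nz _ _ hp₁ hu) hs2
  have hqu' : δ * (q₀ * u') = ε * t₂ := by
    have hz : (δ * (q₀ * u') - ε * t₂) * d' = 0 := by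
      rw [sub_mul]
      have e1 : δ * (q₀ * u') * d' = δ * (q₀ * (u' * d')) := by
        rw [mul_assoc, mul_assoc]
      have e2 : δ * (q₀ * (u' * d')) = δ * (p₁ * (u * d)) := by rw [key]
      have e3 : δ * (p₁ * (u * d)) = (δ * (p₁ * u)) * d := by
        simp only [hp₁def, mul_assoc]
      have e4 : (δ * (p₁ * u)) * d = (ε * s₂) * d := by rw [hδe]
      have e5 : (ε * s₂) * d = ε * (t₂ * d') := by rw [mul_assoc, hsd]
      rw [e1, e2, e3, e4, e5, ← mul_assoc, sub_self]
    rcases hnzd _ _ hz with h | h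
    · exact sub_eq_zero.mp h
    · exact absurd h hd'
  refine ⟨δ * p₁, δ * q₀, nz _ _ hδ hp₁, nz _ _ hδ hq₀, ?_, ?_⟩
  · calc (δ * p₁) * (v * d * b) = δ * ((p₁ * (v * d)) * b) := by
          simp only [hp₁def, mul_assoc]
      _ = δ * (((γ * β) * s) * b) := by rw [key1]
      _ = δ * ((γ * β) * (s * b)) := by rw [mul_assoc]
      _ = δ * ((γ * β) * (t * b')) := by rw [hsb]
      _ = δ * (((γ * β) * t) * b') := by simp only [mul_assoc]
      _ = δ * ((q₀ * (v' * d')) * b') := by rw [key2]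
      _ = (δ * q₀) * (v' * d' * b') := by simp only [mul_assoc]
  · calc (δ * p₁) * (u * c) = (δ * (p₁ * u)) * c := by
          simp only [hp₁def, mul_assoc]
      _ = (ε * s₂) * c := by rw [hδe]
      _ = ε * (s₂ * c) := by rw [mul_assoc]
      _ = ε * (t₂ * c') := by rw [hsc]
      _ = (ε * t₂) * c' := by rw [mul_assoc]
      _ = (δ * (q₀ * u')) * c' := by rw [hqu']
      _ = (δ * q₀) * (u' * c') := by simp only [mul_assoc]
end
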